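/- arXiv:1306.0509 — 3 statements merged into one kernel-verified Lean document; each statement's English description precedes it below -/
import Mathlib

section
/- For real numbers x, y with 0 ≤ x < 1 and 0 ≤ y < 1, and parameters α, β, β', γ with 0 < α and α < γ, the integral ∫₀¹ u^(α-1)(1-u)^(γ-α-1)(1-ux)^(-β)(1-uy)^(-β') du equals (Γ(α)Γ(γ-α)/Γ(γ)) · ∑_{m,n≥0} ((α)_{m+n}(β)_m(β')_n / ((γ)_{m+n} m! n!)) xᵐ yⁿ, where the double series converges absolutely. -/
open MeasureTheory Real

/-- Pochhammer symbol `(a)_n = a(a+1)⋯(a+n-1)`. -/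
noncomputable def poch (a : ℝ) (n : ℕ) : ℝ := ∏ i ∈ Finset.range n, (a + i)

/-- Term of the Appell `F₁` double series. -/
noncomputable def appellTerm (α β β' γ x y : ℝ) (p : ℕ × ℕ) : ℝ :=
  poch α (p.1 + p.2) * poch β p.1 * poch β' p.2 /
    (poch γ (p.1 + p.2) * p.1.factorial * p.2.factorial) * x ^ p.1 * y ^ p.2

open Set

/-!
Expand `(1 - u x)^(-β)` and `(1 - u y)^(-β')` by the binomial series `∑ (β)_m (u x)^m / m!`,
which converge absolutely for `u ∈ (0, 1]`, and integrate the resulting double series term by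
term against `u^(α-1) (1-u)^(γ-α-1)`. The `(m, n)` term is a Beta integral,
`B(α + m + n, γ - α) = Γ(α)Γ(γ-α)/Γ(γ) · (α)_{m+n} / (γ)_{m+n}`. The interchange of sum and
integral is justified because the integrals of the absolute values of the terms add up to
`Γ(α)Γ(γ-α)/Γ(γ) ∑ |appellTerm|`, and `(α)_k ≤ (γ)_k` bounds that series by the product of two
absolutely convergent binomial series.
-/

lemma poch_succ (a : ℝ) (n : ℕ) : poch a (n + 1) = poch a n * (a + n) :=
  Finset.prod_range_succ _ _

lemma poch_pos {a : ℝ} (ha : 0 < a) (n : ℕ) : 0 < poch a n :=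
  Finset.prod_pos fun i _ ↦ by positivity

lemma poch_le_poch {a b : ℝ} (ha : 0 < a) (hab : a ≤ b) (n : ℕ) : poch a n ≤ poch b n :=
  Finset.prod_le_prod (fun i _ ↦ by positivity) (fun i _ ↦ by linarith)

lemma poch_eq_ascPochhammer_eval (a : ℝ) (n : ℕ) : poch a n = (ascPochhammer ℝ n).eval a := by
  induction n with
  | zero => simp [poch]
  | succ n ih => rw [poch_succ, ascPochhammer_succ_eval, ih]

lemma choose_add_sub_one_eq_poch_div_factorial (a : ℝ) (n : ℕ) :
    Ring.choose (a + n - 1) n = poch a n / n.factorial := by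
  rw [Ring.choose_eq_smul, Polynomial.descPochhammer_smeval_eq_ascPochhammer,
    Polynomial.ascPochhammer_smeval_eq_eval,
    show a + n - 1 - n + 1 = a by ring, smul_eq_mul, poch_eq_ascPochhammer_eval, inv_mul_eq_div]

lemma Gamma_add_nat_eq_mul_poch {a : ℝ} (ha : 0 < a) (k : ℕ) :
    Gamma (a + k) = Gamma a * poch a k := by
  induction k with
  | zero => simp [poch]
  | succ k ih =>
    rw [Nat.cast_succ, ← add_assoc, Gamma_add_one (by positivity), ih, poch_succ]
    ring

noncomputable def binomialTerm (β t : ℝ) (n : ℕ) : ℝ := poch β n / n.factorial * t ^ n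

lemma mem_eball_zero_one_iff {t : ℝ} : t ∈ Metric.eball (0 : ℝ) 1 ↔ |t| < 1 := by
  rw [Metric.mem_eball, edist_zero_right, ← ENNReal.ofReal_one, Real.enorm_eq_ofReal_abs,
    ENNReal.ofReal_lt_ofReal_iff one_pos]

lemma hasFPowerSeriesOnBall_one_sub_rpow_neg (β : ℝ) :
    HasFPowerSeriesOnBall (fun t ↦ (1 - t) ^ (-β))
      (.ofScalars ℝ fun n ↦ poch β n / n.factorial) 0 1 := by
  have h := one_div_one_sub_rpow_hasFPowerSeriesOnBall_zero β
  simp only [choose_add_sub_one_eq_poch_div_factorial] at h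
  refine h.congr fun t ht ↦ ?_
  have ht' : t < 1 := (abs_lt.1 (mem_eball_zero_one_iff.1 ht)).2
  simp only [rpow_neg (by linarith : (0 : ℝ) ≤ 1 - t), one_div]

lemma hasSum_binomialTerm (β : ℝ) {t : ℝ} (ht : |t| < 1) :
    HasSum (binomialTerm β t) ((1 - t) ^ (-β)) := by
  have h := (hasFPowerSeriesOnBall_one_sub_rpow_neg β).hasSum (mem_eball_zero_one_iff.2 ht)
  simp only [FormalMultilinearSeries.ofScalars_apply_eq, smul_eq_mul, zero_add] at h
  exact h

lemma summable_norm_binomialTerm (β : ℝ) {t : ℝ} (ht : |t| < 1) :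
    Summable fun n ↦ ‖binomialTerm β t n‖ :=
  (FormalMultilinearSeries.summable_norm_apply _ <| Metric.eball_subset_eball
    (hasFPowerSeriesOnBall_one_sub_rpow_neg β).r_le (mem_eball_zero_one_iff.2 ht)).congr
    fun n ↦ by rw [FormalMultilinearSeries.ofScalars_apply_eq, smul_eq_mul]; rfl

lemma ofReal_rpow_mul_one_sub_rpow {u : ℝ} (hu : u ∈ Icc 0 1) (a b : ℝ) :
    ((u ^ (a - 1) * (1 - u) ^ (b - 1) : ℝ) : ℂ)
      = (u : ℂ) ^ (a - 1 : ℂ) * (1 - u : ℂ) ^ (b - 1 : ℂ) := by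
  rw [Complex.ofReal_mul, Complex.ofReal_cpow hu.1, Complex.ofReal_cpow (sub_nonneg.2 hu.2)]
  push_cast
  rfl

lemma integrableOn_rpow_mul_one_sub_rpow {a b : ℝ} (ha : 0 < a) (hb : 0 < b) :
    IntegrableOn (fun u : ℝ ↦ u ^ (a - 1) * (1 - u) ^ (b - 1)) (Ioc 0 1) := by
  have h := (intervalIntegrable_iff_integrableOn_Ioc_of_le zero_le_one).1
    (Complex.betaIntegral_convergent (u := a) (v := b) (by simpa) (by simpa))
  refine IntegrableOn.congr_fun h.re (fun u hu ↦ ?_) measurableSet_Ioc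
  simp only [← ofReal_rpow_mul_one_sub_rpow (Ioc_subset_Icc_self hu), RCLike.re_to_complex,
    Complex.ofReal_re]

lemma integral_rpow_mul_one_sub_rpow {a b : ℝ} (ha : 0 < a) (hb : 0 < b) :
    ∫ u in Ioc (0 : ℝ) 1, u ^ (a - 1) * (1 - u) ^ (b - 1)
      = Gamma a * Gamma b / Gamma (a + b) := by
  apply Complex.ofReal_injective
  calc ((∫ u in Ioc (0 : ℝ) 1, u ^ (a - 1) * (1 - u) ^ (b - 1) : ℝ) : ℂ)
      = Complex.betaIntegral a b := by
        rw [← integral_complex_ofReal, Complex.betaIntegral,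
          intervalIntegral.integral_of_le zero_le_one]
        exact setIntegral_congr_fun measurableSet_Ioc fun u hu ↦
          ofReal_rpow_mul_one_sub_rpow (Ioc_subset_Icc_self hu) a b
    _ = _ := by
        rw [Complex.ofReal_div,
          eq_div_iff (by exact_mod_cast (Gamma_pos_of_pos (add_pos ha hb)).ne'),
          mul_comm, Complex.ofReal_mul, ← Complex.Gamma_ofReal, ← Complex.Gamma_ofReal,
          ← Complex.Gamma_ofReal, Complex.ofReal_add,
          Complex.Gamma_mul_Gamma_eq_betaIntegral (by simpa) (by simpa)]

lemma integral_rpow_add_nat_mul_one_sub_rpow {α γ : ℝ} (hα : 0 < α) (hαγ : α < γ) (k : ℕ) :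
    ∫ u in Ioc (0 : ℝ) 1, u ^ (α + k - 1) * (1 - u) ^ (γ - α - 1)
      = Gamma α * Gamma (γ - α) / Gamma γ * (poch α k / poch γ k) := by
  have hγ : 0 < γ := hα.trans hαγ
  rw [integral_rpow_mul_one_sub_rpow (by positivity) (sub_pos.2 hαγ),
    show α + k + (γ - α) = γ + k by ring, Gamma_add_nat_eq_mul_poch hα,
    Gamma_add_nat_eq_mul_poch hγ]
  have := (Gamma_pos_of_pos hγ).ne'
  have := (poch_pos hγ k).ne'
  field_simp

noncomputable def appellIntegrandTerm (α β β' γ x y : ℝ) (p : ℕ × ℕ) (u : ℝ) : ℝ :=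
  binomialTerm β x p.1 * binomialTerm β' y p.2 *
    (u ^ (α + (p.1 + p.2 : ℕ) - 1) * (1 - u) ^ (γ - α - 1))

section Appell

variable {α β β' γ x y : ℝ}

lemma appellTerm_eq (p : ℕ × ℕ) :
    appellTerm α β β' γ x y p = poch α (p.1 + p.2) / poch γ (p.1 + p.2) *
      (binomialTerm β x p.1 * binomialTerm β' y p.2) := by
  simp only [appellTerm, binomialTerm]
  ring

lemma summable_abs_appellTerm (hα : 0 < α) (hαγ : α ≤ γ) (hx : |x| < 1) (hy : |y| < 1) :
    Summable fun p ↦ |appellTerm α β β' γ x y p| := by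
  have hprod : Summable fun p : ℕ × ℕ ↦ ‖binomialTerm β x p.1 * binomialTerm β' y p.2‖ :=
    (summable_norm_binomialTerm β hx).mul_norm (summable_norm_binomialTerm β' hy)
  refine hprod.of_nonneg_of_le (fun _ ↦ abs_nonneg _) fun p ↦ ?_
  have hγ := hα.trans_le hαγ
  rw [appellTerm_eq, abs_mul, abs_of_nonneg (div_nonneg (poch_pos hα _).le (poch_pos hγ _).le),
    Real.norm_eq_abs]
  exact mul_le_of_le_one_left (abs_nonneg _)
    (div_le_one_of_le₀ (poch_le_poch hα hαγ _) (poch_pos hγ _).le)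

lemma hasSum_appellIntegrandTerm (hx : |x| < 1) (hy : |y| < 1) {u : ℝ} (hu : u ∈ Ioc 0 1) :
    HasSum (fun p ↦ appellIntegrandTerm α β β' γ x y p u)
      (u ^ (α - 1) * (1 - u) ^ (γ - α - 1) * (1 - u * x) ^ (-β) * (1 - u * y) ^ (-β')) := by
  have hux : |u * x| < 1 := by
    rw [abs_mul, abs_of_pos hu.1]; exact (mul_le_of_le_one_left (abs_nonneg _) hu.2).trans_lt hx
  have huy : |u * y| < 1 := by
    rw [abs_mul, abs_of_pos hu.1]; exact (mul_le_of_le_one_left (abs_nonneg _) hu.2).trans_lt hy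
  have h := ((hasSum_binomialTerm β hux).mul (hasSum_binomialTerm β' huy)
    (summable_mul_of_summable_norm (summable_norm_binomialTerm β hux)
      (summable_norm_binomialTerm β' huy))).mul_left (u ^ (α - 1) * (1 - u) ^ (γ - α - 1))
  have hterm (p : ℕ × ℕ) : u ^ (α - 1) * (1 - u) ^ (γ - α - 1) *
      (binomialTerm β (u * x) p.1 * binomialTerm β' (u * y) p.2) =
        appellIntegrandTerm α β β' γ x y p u := by
    unfold appellIntegrandTerm binomialTerm
    rw [add_sub_right_comm, rpow_add hu.1, rpow_natCast, pow_add, mul_pow, mul_pow]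
    ring
  simp only [hterm] at h
  rwa [← mul_assoc] at h

lemma integrableOn_appellIntegrandTerm (hα : 0 < α) (hαγ : α < γ) (p : ℕ × ℕ) :
    IntegrableOn (appellIntegrandTerm α β β' γ x y p) (Ioc 0 1) :=
  (integrableOn_rpow_mul_one_sub_rpow (by positivity) (sub_pos.2 hαγ)).const_mul _

lemma integral_appellIntegrandTerm (hα : 0 < α) (hαγ : α < γ) (p : ℕ × ℕ) :
    ∫ u in Ioc (0 : ℝ) 1, appellIntegrandTerm α β β' γ x y p u
      = Gamma α * Gamma (γ - α) / Gamma γ * appellTerm α β β' γ x y p := by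
  unfold appellIntegrandTerm
  rw [integral_const_mul, integral_rpow_add_nat_mul_one_sub_rpow hα hαγ, appellTerm_eq]
  ring

lemma integral_norm_appellIntegrandTerm (hα : 0 < α) (hαγ : α < γ) (p : ℕ × ℕ) :
    ∫ u in Ioc (0 : ℝ) 1, ‖appellIntegrandTerm α β β' γ x y p u‖
      = Gamma α * Gamma (γ - α) / Gamma γ * |appellTerm α β β' γ x y p| := by
  have hγ := hα.trans hαγ
  have hnorm : EqOn (fun u ↦ ‖appellIntegrandTerm α β β' γ x y p u‖) (fun u ↦
      |binomialTerm β x p.1 * binomialTerm β' y p.2| *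
        (u ^ (α + (p.1 + p.2 : ℕ) - 1) * (1 - u) ^ (γ - α - 1))) (Ioc 0 1) := fun u hu ↦ by
    dsimp only [appellIntegrandTerm]
    rw [norm_mul, Real.norm_eq_abs, Real.norm_of_nonneg
      (mul_nonneg (rpow_nonneg hu.1.le _) (rpow_nonneg (sub_nonneg.2 hu.2) _))]
  rw [setIntegral_congr_fun measurableSet_Ioc hnorm, integral_const_mul,
    integral_rpow_add_nat_mul_one_sub_rpow hα hαγ, appellTerm_eq, abs_mul (_ / _),
    abs_of_nonneg (div_nonneg (poch_pos hα _).le (poch_pos hγ _).le)]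
  ring

end Appell

/-- Euler-type integral representation of Appell's first hypergeometric function:
for `0 ≤ x < 1`, `0 ≤ y < 1`, `0 < α < γ`, the double series converges absolutely and
`∫₀¹ u^(α-1)(1-u)^(γ-α-1)(1-ux)^(-β)(1-uy)^(-β') du = Γ(α)Γ(γ-α)/Γ(γ) · F₁(α,β,β';γ;x,y)`. -/
theorem integral_rep_appellF1 (α β β' γ x y : ℝ)
    (hx0 : 0 ≤ x) (hx1 : x < 1) (hy0 : 0 ≤ y) (hy1 : y < 1)
    (hα : 0 < α) (hαγ : α < γ) :
    Summable (fun p : ℕ × ℕ => |appellTerm α β β' γ x y p|) ∧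
    ∫ u in (0:ℝ)..1,
        u ^ (α - 1) * (1 - u) ^ (γ - α - 1) * (1 - u * x) ^ (-β) * (1 - u * y) ^ (-β')
      = (Real.Gamma α * Real.Gamma (γ - α) / Real.Gamma γ) *
          ∑' p : ℕ × ℕ, appellTerm α β β' γ x y p := by
  have hx : |x| < 1 := abs_lt.2 ⟨by linarith, hx1⟩
  have hy : |y| < 1 := abs_lt.2 ⟨by linarith, hy1⟩
  have hsum := summable_abs_appellTerm (β := β) (β' := β') hα hαγ.le hx hy
  refine ⟨hsum, ?_⟩
  rw [intervalIntegral.integral_of_le zero_le_one,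
    setIntegral_congr_fun measurableSet_Ioc fun u hu ↦
      (hasSum_appellIntegrandTerm hx hy hu).tsum_eq.symm,
    ← integral_tsum_of_summable_integral_norm (integrableOn_appellIntegrandTerm hα hαγ)
      (by simpa only [integral_norm_appellIntegrandTerm hα hαγ] using hsum.mul_left _),
    tsum_congr (integral_appellIntegrandTerm hα hαγ), tsum_mul_left]
end

section
/- Let a = b > c > 0 (an oblate spheroid x²/a² + y²/a² + z²/c² = 1). Then the surface area, given by 8·∫₀^a ∫₀^{a√(1−x²/a²)} √[(1 − δ x²/a² − δ y²/a²)/(1 − x²/a² − y²/a²)] dy dx with δ = 1 − c²/a², equals 2πa² + πc²·(1/√(1−c²/a²))·log((1+√(1−c²/a²))/(1−√(1−c²/a²))). -/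
/-!
The integrand and the domain of the octant integral (the quarter disk of radius `a`) depend only
on `x² + y²`, so polar coordinates turn it into `π/2 · ∫₀^a r f(r²) dr`. Writing
`p = √(1 - r²/a²)`, `q = √(1 - δ r²/a²)` and `s = √δ`, the radial integrand `r q / p` has the
primitive `-(a²/2) p q - a² (1 - δ) / (2 s) · log (s p + q)`: its derivative collapses to
`r q / p` because `q² = 1 - δ + δ p²`. The integrand blows up at `r = a`, but it is nonnegative
and the primitive is continuous up to `r = a`, so it is integrable and the integral is the
difference of the primitive at the endpoints.
-/

open MeasureTheory Real Set

def quarterDisk (a : ℝ) : Set (ℝ × ℝ) := {p | 0 < p.1 ∧ 0 < p.2 ∧ p.1 ^ 2 + p.2 ^ 2 < a ^ 2}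

lemma measurableSet_quarterDisk (a : ℝ) : MeasurableSet (quarterDisk a) :=
  (measurableSet_lt measurable_const measurable_fst).inter <|
    (measurableSet_lt measurable_const measurable_snd).inter <|
      measurableSet_lt (f := fun p : ℝ × ℝ ↦ p.1 ^ 2 + p.2 ^ 2) (by fun_prop) measurable_const

lemma mem_quarterDisk_iff {a : ℝ} {p : ℝ × ℝ} :
    p ∈ quarterDisk a ↔ p.1 ∈ Ioo 0 |a| ∧ p.2 ∈ Ioo 0 √(a ^ 2 - p.1 ^ 2) := by
  obtain ⟨x, y⟩ := p
  simp only [quarterDisk, mem_ofPred_eq, mem_Ioo]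
  constructor
  · rintro ⟨hx, hy, hxy⟩
    refine ⟨⟨hx, ?_⟩, hy, (lt_sqrt hy.le).2 (by linarith)⟩
    simpa [abs_of_pos hx] using sq_lt_sq.1 (by nlinarith : x ^ 2 < a ^ 2)
  · rintro ⟨⟨hx, -⟩, hy, hya⟩
    exact ⟨hx, hy, by linarith [(lt_sqrt hy.le).1 hya]⟩

lemma polarCoord_symm_mem_quarterDisk_iff {a : ℝ} {p : ℝ × ℝ} (hp : p ∈ polarCoord.target) :
    polarCoord.symm p ∈ quarterDisk a ↔ p ∈ Ioo 0 |a| ×ˢ Ioo 0 (π / 2) := by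
  obtain ⟨r, θ⟩ := p
  obtain ⟨hr, hθ₁, hθ₂⟩ := hp
  simp only [mem_Ioi] at hr
  have hnorm : (r * cos θ) ^ 2 + (r * sin θ) ^ 2 = r ^ 2 := by
    linear_combination r ^ 2 * cos_sq_add_sin_sq θ
  simp only [quarterDisk, polarCoord_symm_apply, mem_ofPred_eq, hnorm, mem_prod, mem_Ioo, hr,
    true_and, mul_pos_iff_of_pos_left hr, sq_lt_sq, abs_of_pos hr]
  constructor
  · rintro ⟨hcos, hsin, hra⟩
    refine ⟨hra, not_le.1 fun h ↦ ?_, not_le.1 fun h ↦ ?_⟩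
    · exact hsin.not_ge (sin_nonpos_of_nonpos_of_neg_pi_le h hθ₁.le)
    · exact hcos.not_ge (cos_nonpos_of_pi_div_two_le_of_le h (by linarith))
  · rintro ⟨hra, hθ0, hθπ⟩
    exact ⟨cos_pos_of_mem_Ioo ⟨by linarith, hθπ⟩, sin_pos_of_pos_of_lt_pi hθ0 (by linarith), hra⟩

lemma Ioo_prod_Ioo_subset_polarCoord_target (a : ℝ) :
    Ioo 0 a ×ˢ Ioo 0 (π / 2) ⊆ polarCoord.target := fun _ ⟨hr, hθ⟩ ↦
  ⟨hr.1, by linarith [hθ.1, pi_pos], by linarith [hθ.2, pi_pos]⟩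

lemma polarCoord_symm_image_quarterDisk (a : ℝ) :
    polarCoord.symm '' (Ioo 0 |a| ×ˢ Ioo 0 (π / 2)) = quarterDisk a := by
  ext p
  constructor
  · rintro ⟨q, hq, rfl⟩
    exact (polarCoord_symm_mem_quarterDisk_iff (Ioo_prod_Ioo_subset_polarCoord_target _ hq)).2 hq
  · intro hp
    have hsource : p ∈ polarCoord.source := Or.inr hp.2.1.ne'
    refine ⟨polarCoord p, ?_, polarCoord.left_inv hsource⟩
    rw [← polarCoord_symm_mem_quarterDisk_iff (polarCoord.map_source hsource),
      polarCoord.left_inv hsource]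
    exact hp

lemma abs_det_smul_comp_polarCoord_symm {p : ℝ × ℝ} (hp : 0 < p.1) (F : ℝ → ℝ) :
    |(fderivPolarCoordSymm p).det| • F ((polarCoord.symm p).1 ^ 2 + (polarCoord.symm p).2 ^ 2)
      = p.1 * F (p.1 ^ 2) := by
  obtain ⟨r, θ⟩ := p
  rw [det_fderivPolarCoordSymm, abs_of_pos hp, polarCoord_symm_apply, smul_eq_mul]
  congr 2
  linear_combination r ^ 2 * cos_sq_add_sin_sq θ

theorem integral_quarterDisk_radial (a : ℝ) (F : ℝ → ℝ) :
    ∫ p in quarterDisk a, F (p.1 ^ 2 + p.2 ^ 2) = π / 2 * ∫ r in 0..|a|, r * F (r ^ 2) := by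
  rw [← polarCoord_symm_image_quarterDisk, integral_image_eq_integral_abs_det_fderiv_smul volume
      (measurableSet_Ioo.prod measurableSet_Ioo)
      (fun p _ ↦ (hasFDerivAt_polarCoord_symm p).hasFDerivWithinAt)
      (polarCoord.symm.injOn.mono (Ioo_prod_Ioo_subset_polarCoord_target _)),
    setIntegral_congr_fun (measurableSet_Ioo.prod measurableSet_Ioo)
      fun p hp ↦ abs_det_smul_comp_polarCoord_symm hp.1.1 F,
    Measure.volume_eq_prod, ← Measure.prod_restrict, integral_fun_fst (fun r ↦ r * F (r ^ 2)),
    intervalIntegral.integral_of_le (abs_nonneg a), integral_Ioc_eq_integral_Ioo]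
  simp [Real.volume_real_Ioo_of_le (by positivity : (0 : ℝ) ≤ π / 2)]

theorem integrableOn_quarterDisk_radial {a : ℝ} {F : ℝ → ℝ}
    (hF : IntervalIntegrable (fun r ↦ r * F (r ^ 2)) volume 0 |a|) :
    IntegrableOn (fun p : ℝ × ℝ ↦ F (p.1 ^ 2 + p.2 ^ 2)) (quarterDisk a) := by
  rw [← polarCoord_symm_image_quarterDisk,
    integrableOn_image_iff_integrableOn_abs_det_fderiv_smul volume
      (measurableSet_Ioo.prod measurableSet_Ioo)
      (fun p _ ↦ (hasFDerivAt_polarCoord_symm p).hasFDerivWithinAt)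
      (polarCoord.symm.injOn.mono (Ioo_prod_Ioo_subset_polarCoord_target _))]
  refine IntegrableOn.congr_fun ?_ (fun p hp ↦ (abs_det_smul_comp_polarCoord_symm hp.1.1 F).symm)
    (measurableSet_Ioo.prod measurableSet_Ioo)
  rw [IntegrableOn, Measure.volume_eq_prod, ← Measure.prod_restrict]
  exact ((intervalIntegrable_iff_integrableOn_Ioo_of_le (abs_nonneg a)).1 hF).comp_fst _

theorem integral_quarterDisk_eq_iterated {a : ℝ} {G : ℝ × ℝ → ℝ}
    (hG : IntegrableOn G (quarterDisk a)) :
    ∫ p in quarterDisk a, G p = ∫ x in 0..|a|, ∫ y in 0..√(a ^ 2 - x ^ 2), G (x, y) := by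
  have hslice : ∀ x, ∫ y, (quarterDisk a).indicator G (x, y)
      = (Ioo 0 |a|).indicator (fun x ↦ ∫ y in 0..√(a ^ 2 - x ^ 2), G (x, y)) x := by
    intro x
    by_cases hx : x ∈ Ioo 0 |a|
    · rw [indicator_of_mem hx, intervalIntegral.integral_of_le (sqrt_nonneg _),
        integral_Ioc_eq_integral_Ioo, ← integral_indicator measurableSet_Ioo]
      congr 1 with y
      simp only [indicator, mem_quarterDisk_iff, hx, true_and]
    · simp [indicator, mem_quarterDisk_iff, hx]
  rw [← integral_indicator (measurableSet_quarterDisk a), Measure.volume_eq_prod,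
    integral_prod _ (hG.integrable_indicator (measurableSet_quarterDisk a)),
    intervalIntegral.integral_of_le (abs_nonneg a), integral_Ioc_eq_integral_Ioo,
    ← integral_indicator measurableSet_Ioo]
  simp only [hslice]

theorem integral_integral_quarterDisk_radial {a : ℝ} (ha : 0 ≤ a) {F : ℝ → ℝ}
    (hF : IntervalIntegrable (fun r ↦ r * F (r ^ 2)) volume 0 a) :
    ∫ x in 0..a, ∫ y in 0..√(a ^ 2 - x ^ 2), F (x ^ 2 + y ^ 2)
      = π / 2 * ∫ r in 0..a, r * F (r ^ 2) := by
  rw [← abs_of_nonneg ha] at hF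
  have h := integral_quarterDisk_eq_iterated (integrableOn_quarterDisk_radial hF)
  rw [integral_quarterDisk_radial, abs_of_nonneg ha] at h
  exact h.symm

/-- The area element `√(1 + z_x² + z_y²)` of the graph `z = c √(1 - (x² + y²) / a²)`, written as a
function of `t = x² + y²`, where `δ = 1 - c² / a²`. -/
noncomputable def spheroidAreaDensity (a δ t : ℝ) : ℝ := √((1 - δ * t / a ^ 2) / (1 - t / a ^ 2))

noncomputable def spheroidAreaPrimitive (a δ r : ℝ) : ℝ :=
  -(a ^ 2 / 2) * (√(1 - r ^ 2 / a ^ 2) * √(1 - δ * r ^ 2 / a ^ 2))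
    - a ^ 2 * (1 - δ) / (2 * √δ) * log (√δ * √(1 - r ^ 2 / a ^ 2) + √(1 - δ * r ^ 2 / a ^ 2))

lemma one_sub_mul_div_pos {δ t b : ℝ} (hδ : δ < 1) (ht : 0 ≤ t) (htb : t ≤ b) :
    0 < 1 - δ * t / b := by
  have h₀ : 0 ≤ t / b := div_nonneg ht (ht.trans htb)
  have h₁ : t / b ≤ 1 := div_le_one_of_le₀ htb (ht.trans htb)
  rw [mul_div_assoc]
  rcases le_or_gt 0 δ with hδ₀ | hδ₀ <;> nlinarith

lemma continuousOn_spheroidAreaPrimitive {a δ : ℝ} (hδ : δ < 1) :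
    ContinuousOn (spheroidAreaPrimitive a δ) (Icc 0 a) := by
  refine (Continuous.continuousOn (by fun_prop)).sub
    (continuousOn_const.mul ((Continuous.continuousOn (by fun_prop)).log fun r hr ↦ ?_))
  have hq := one_sub_mul_div_pos hδ (sq_nonneg r) (pow_le_pow_left₀ hr.1 hr.2 2)
  positivity

lemma hasDerivAt_spheroidAreaPrimitive {a δ r : ℝ} (hδ₀ : 0 < δ) (hδ₁ : δ < 1)
    (hr : r ∈ Ioo 0 a) :
    HasDerivAt (spheroidAreaPrimitive a δ) (r * spheroidAreaDensity a δ (r ^ 2)) r := by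
  obtain ⟨hr₀, hra⟩ := hr
  have hp₀ : 0 < 1 - r ^ 2 / a ^ 2 := by
    rw [sub_pos, div_lt_one (by nlinarith)]; nlinarith
  have hq₀ := one_sub_mul_div_pos hδ₁ (sq_nonneg r) (pow_le_pow_left₀ hr₀.le hra.le 2)
  have hp' : HasDerivAt (fun r ↦ √(1 - r ^ 2 / a ^ 2))
      (-(2 * r / a ^ 2) / (2 * √(1 - r ^ 2 / a ^ 2))) r :=
    (((hasDerivAt_pow 2 r).div_const (a ^ 2)).const_sub 1).sqrt hp₀.ne' |>.congr_deriv
      (by push_cast; ring)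
  have hq' : HasDerivAt (fun r ↦ √(1 - δ * r ^ 2 / a ^ 2))
      (-(2 * (δ * r) / a ^ 2) / (2 * √(1 - δ * r ^ 2 / a ^ 2))) r :=
    ((((hasDerivAt_pow 2 r).const_mul δ).div_const (a ^ 2)).const_sub 1).sqrt hq₀.ne' |>.congr_deriv
      (by push_cast; ring)
  have hs := sqrt_pos.2 hδ₀
  have hp := sqrt_pos.2 hp₀
  have hq := sqrt_pos.2 hq₀
  have hlog := ((hp'.const_mul √δ).add hq').log (add_pos (mul_pos hs hp) hq).ne'
  refine (((hp'.mul hq').const_mul (-(a ^ 2 / 2))).sub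
    (hlog.const_mul (a ^ 2 * (1 - δ) / (2 * √δ)))).congr_deriv ?_
  have hrel : √(1 - δ * r ^ 2 / a ^ 2) ^ 2 = 1 - δ + δ * √(1 - r ^ 2 / a ^ 2) ^ 2 := by
    rw [sq_sqrt hp₀.le, sq_sqrt hq₀.le]; ring
  have ha : a ≠ 0 := by nlinarith
  have hsδ := sq_sqrt hδ₀.le
  rw [spheroidAreaDensity, sqrt_div hq₀.le, Pi.add_apply]
  clear hp' hq' hlog
  generalize √(1 - r ^ 2 / a ^ 2) = p at *
  generalize √(1 - δ * r ^ 2 / a ^ 2) = q at *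
  generalize √δ = s at *
  subst hsδ
  field_simp
  linear_combination -(q + p * s) * hrel

lemma intervalIntegrable_mul_spheroidAreaDensity {a δ : ℝ} (ha : 0 ≤ a) (hδ₀ : 0 < δ)
    (hδ₁ : δ < 1) :
    IntervalIntegrable (fun r ↦ r * spheroidAreaDensity a δ (r ^ 2)) volume 0 a :=
  (intervalIntegrable_iff_integrableOn_Ioc_of_le ha).2 <|
    intervalIntegral.integrableOn_deriv_of_nonneg (continuousOn_spheroidAreaPrimitive hδ₁)
      (fun _ hr ↦ hasDerivAt_spheroidAreaPrimitive hδ₀ hδ₁ hr)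
      fun _ hr ↦ mul_nonneg hr.1.le (sqrt_nonneg _)

theorem integral_mul_spheroidAreaDensity {a δ : ℝ} (ha : 0 < a) (hδ₀ : 0 < δ) (hδ₁ : δ < 1) :
    ∫ r in 0..a, r * spheroidAreaDensity a δ (r ^ 2)
      = a ^ 2 / 2 + a ^ 2 * (1 - δ) / (4 * √δ) * log ((1 + √δ) / (1 - √δ)) := by
  rw [intervalIntegral.integral_eq_sub_of_hasDerivAt_of_le ha.le
    (continuousOn_spheroidAreaPrimitive hδ₁)
    (fun _ hr ↦ hasDerivAt_spheroidAreaPrimitive hδ₀ hδ₁ hr)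
    (intervalIntegrable_mul_spheroidAreaDensity ha.le hδ₀ hδ₁)]
  have hs₀ : 0 < √δ := sqrt_pos.2 hδ₀
  have hs₁ : √δ < 1 := by simpa using sqrt_lt_sqrt hδ₀.le hδ₁
  have hfactor : 1 - δ = (1 - √δ) * (1 + √δ) := by linear_combination sq_sqrt hδ₀.le
  have hlog : log √(1 - δ) = (log (1 - √δ) + log (1 + √δ)) / 2 := by
    rw [log_sqrt (by linarith), hfactor, log_mul (by linarith) (by linarith)]
  have hone : a ^ 2 / a ^ 2 = 1 := div_self (pow_ne_zero 2 ha.ne')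
  norm_num [spheroidAreaPrimitive, mul_div_assoc, hone, hlog, add_comm √δ 1,
    log_div (by linarith : 1 + √δ ≠ 0) (by linarith : 1 - √δ ≠ 0)]
  ring

/-- Surface area of the oblate spheroid `x²/a² + y²/a² + z²/c² = 1` (`a = b > c > 0`),
expressed as 8 times the octant double integral, equals
`2πa² + πc²·(1/√(1-c²/a²))·log((1+√(1-c²/a²))/(1-√(1-c²/a²)))`. -/
theorem oblate_spheroid_area (a c : ℝ) (hc : 0 < c) (hca : c < a) :
    8 * ∫ x in (0:ℝ)..a, ∫ y in (0:ℝ)..(a * Real.sqrt (1 - x^2/a^2)),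
        Real.sqrt ((1 - (1 - c^2/a^2) * x^2/a^2 - (1 - c^2/a^2) * y^2/a^2) /
          (1 - x^2/a^2 - y^2/a^2))
      = 2 * Real.pi * a^2
        + Real.pi * c^2 * (1 / Real.sqrt (1 - c^2/a^2)) *
            Real.log ((1 + Real.sqrt (1 - c^2/a^2)) / (1 - Real.sqrt (1 - c^2/a^2))) := by
  have ha : 0 < a := hc.trans hca
  set δ := 1 - c ^ 2 / a ^ 2 with hδ
  have hδ₀ : 0 < δ := by rw [hδ, sub_pos, div_lt_one (by positivity)]; nlinarith
  have hδ₁ : δ < 1 := by linarith [show 0 < c ^ 2 / a ^ 2 by positivity]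
  have hbound (x : ℝ) : a * √(1 - x ^ 2 / a ^ 2) = √(a ^ 2 - x ^ 2) := by
    rw [← sqrt_sq ha.le, ← sqrt_mul (sq_nonneg a), sqrt_sq ha.le]
    congr 1
    field_simp
  have hintegrand (x y : ℝ) :
      √((1 - δ * x ^ 2 / a ^ 2 - δ * y ^ 2 / a ^ 2) / (1 - x ^ 2 / a ^ 2 - y ^ 2 / a ^ 2))
        = spheroidAreaDensity a δ (x ^ 2 + y ^ 2) := by
    rw [spheroidAreaDensity]
    congr 2 <;> ring
  simp only [hbound, hintegrand]
  rw [integral_integral_quarterDisk_radial ha.le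
      (intervalIntegrable_mul_spheroidAreaDensity ha.le hδ₀ hδ₁),
    integral_mul_spheroidAreaDensity ha hδ₀ hδ₁, show 1 - δ = c ^ 2 / a ^ 2 by rw [hδ]; ring]
  field_simp
  ring
end

section
/- For a > c > 0, (1/2)·∫₀^∞ dr / ( (a²+r)·√(c²+r) ) = arcsin(√(1−c²/a²)) / (a·√(1−c²/a²)). Equivalently, the capacitance of the oblate spheroid with a = b > c is C = a·√(1−c²/a²)/arcsin(√(1−c²/a²)). -/
open MeasureTheory Real Filter Set Topology

/-! The substitution `s = √(c² + r)` turns the integrand into `2 / (k² + s²)` with `k² = a² - c²`,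
so `r ↦ (2/k)·arctan(√(c² + r)/k)` is an antiderivative and the integral equals
`(2/k)·(π/2 - arctan (c/k)) = (2/k)·arctan (k/c)`. Writing `k = a e` with the eccentricity
`e = √(1 - c²/a²)`, one has `c/a = √(1 - e²)`, so `arctan (k/c) = arcsin e`. -/

lemma hasDerivAt_arctan_sqrt_add_div {c k r : ℝ} (hk : 0 < k) (hr : 0 < c + r) :
    HasDerivAt (fun x => 2 / k * arctan (√(c + x) / k)) (((c + k ^ 2 + r) * √(c + r))⁻¹) r := by
  have hsqrt : HasDerivAt (fun x => √(c + x)) (1 / (2 * √(c + r))) r := by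
    simpa using ((hasDerivAt_id r).const_add c).sqrt hr.ne'
  have hsq : √(c + r) ^ 2 = c + r := sq_sqrt hr.le
  have hden : 0 < c + k ^ 2 + r := by nlinarith
  refine (((hasDerivAt_arctan _).comp r (hsqrt.div_const k)).const_mul (2 / k)).congr_deriv ?_
  rw [div_pow, hsq]
  field_simp
  ring

lemma integral_Ioi_inv_mul_sqrt_add {c k : ℝ} (hc : 0 < c) (hk : 0 < k) :
    ∫ r in Ioi (0 : ℝ), ((c ^ 2 + k ^ 2 + r) * √(c ^ 2 + r))⁻¹ = 2 / k * arctan (k / c) := by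
  have hderiv : ∀ r ∈ Ici (0 : ℝ),
      HasDerivAt (fun x => 2 / k * arctan (√(c ^ 2 + x) / k))
        (((c ^ 2 + k ^ 2 + r) * √(c ^ 2 + r))⁻¹) r :=
    fun r hr => hasDerivAt_arctan_sqrt_add_div hk (by positivity [mem_Ici.mp hr])
  have hnonneg : ∀ r ∈ Ioi (0 : ℝ), 0 ≤ ((c ^ 2 + k ^ 2 + r) * √(c ^ 2 + r))⁻¹ :=
    fun r hr => by positivity [(mem_Ioi.mp hr).le]
  have hlim : Tendsto (fun x => 2 / k * arctan (√(c ^ 2 + x) / k)) atTop (𝓝 (2 / k * (π / 2))) :=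
    ((tendsto_arctan_atTop.mono_right nhdsWithin_le_nhds).comp
      ((tendsto_sqrt_atTop.comp (tendsto_atTop_add_const_left _ _ tendsto_id)).atTop_div_const
        hk)).const_mul _
  rw [integral_Ioi_of_hasDerivAt_of_nonneg' hderiv hnonneg hlim, add_zero, sqrt_sq hc.le,
    ← mul_sub, ← arctan_inv_of_pos (div_pos hc hk), inv_div]

lemma sqrt_mul_self_mul {x y : ℝ} (hx : 0 ≤ x) : √(x * x * y) = x * √y := by
  rw [sqrt_mul (mul_self_nonneg x), sqrt_mul_self hx]

/-- Capacitance of the oblate spheroid (`a = b > c > 0`):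
`(1/2)·∫₀^∞ dr/((a²+r)√(c²+r)) = arcsin(√(1-c²/a²))/(a√(1-c²/a²))`, i.e.
`C = a√(1-c²/a²)/arcsin(√(1-c²/a²))`. -/
theorem oblate_spheroid_capacitance (a c : ℝ) (hc : 0 < c) (hca : c < a) :
    (1/2) * ∫ r in Set.Ioi (0:ℝ), ((a^2+r) * Real.sqrt (c^2+r))⁻¹
      = Real.arcsin (Real.sqrt (1 - c^2/a^2)) / (a * Real.sqrt (1 - c^2/a^2)) ∧
    ((1/2) * ∫ r in Set.Ioi (0:ℝ),
        (Real.sqrt ((a^2+r)*(a^2+r)*(c^2+r)))⁻¹)⁻¹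
      = a * Real.sqrt (1 - c^2/a^2) / Real.arcsin (Real.sqrt (1 - c^2/a^2)) := by
  have ha : 0 < a := hc.trans hca
  set e := √(1 - c ^ 2 / a ^ 2)
  have hca2 : c ^ 2 / a ^ 2 < 1 := (div_lt_one (by positivity)).mpr (by nlinarith)
  have he : 0 < e := sqrt_pos.mpr (by linarith)
  have he1 : e < 1 := (sqrt_lt' one_pos).mpr (by nlinarith [div_pos (pow_pos hc 2) (pow_pos ha 2)])
  have hesq : e ^ 2 = 1 - c ^ 2 / a ^ 2 := sq_sqrt (by linarith)
  have hsplit : a ^ 2 = c ^ 2 + (a * e) ^ 2 := by rw [mul_pow, hesq]; field_simp; ring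
  have hcos : √(1 - e ^ 2) = c / a := by
    rw [hesq, sub_sub_cancel, ← div_pow, sqrt_sq (div_pos hc ha).le]
  have harcsin : arctan (a * e / c) = arcsin e := by
    rw [arcsin_eq_arctan ⟨by linarith, he1⟩, hcos]
    field_simp
  have hhalf : (1 / 2) * ∫ r in Ioi (0 : ℝ), ((a ^ 2 + r) * √(c ^ 2 + r))⁻¹ = arcsin e / (a * e) := by
    rw [hsplit, integral_Ioi_inv_mul_sqrt_add hc (mul_pos ha he), harcsin]
    field_simp
  refine ⟨hhalf, ?_⟩
  have hintegrand : ∀ r ∈ Ioi (0 : ℝ),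
      (√((a ^ 2 + r) * (a ^ 2 + r) * (c ^ 2 + r)))⁻¹ = ((a ^ 2 + r) * √(c ^ 2 + r))⁻¹ :=
    fun r hr => by rw [sqrt_mul_self_mul (by positivity [(mem_Ioi.mp hr).le])]
  rw [setIntegral_congr_fun measurableSet_Ioi hintegrand, hhalf, inv_div]
end
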